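/- arXiv:1207.5443 — 3 statements merged into one kernel-verified Lean document; each statement's English description precedes it below -/
import Mathlib

section
/- Let b ∈ M_N(ℂ) with b diagonal whose first r diagonal entries are all equal. If B is Hermitian and b − U*BU is invertible for all unitaries U, then the matrix E[(b − U*BU)^{−1}] (Haar expectation) has all of its first r diagonal entries equal, and its upper-left r×r corner is a scalar multiple of I_r. -/
open Matrix MeasureTheory

noncomputable instance (N : ℕ) : MeasurableSpace (Matrix.unitaryGroup (Fin N) ℂ) := borel _

instance (N : ℕ) : BorelSpace (Matrix.unitaryGroup (Fin N) ℂ) := ⟨rfl⟩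

/-- entries of a conjugation by a permutation matrix -/
lemma permMat_conj_entry {N : ℕ} (σ : Equiv.Perm (Fin N)) (A : Matrix (Fin N) (Fin N) ℂ)
    (p q : Fin N) :
    ((Matrix.of fun p q : Fin N => if σ p = q then (1:ℂ) else 0) * A *
      (Matrix.of fun p q : Fin N => if σ p = q then (1:ℂ) else 0)ᴴ) p q
      = A (σ p) (σ q) := by
  simp [Matrix.mul_apply, Matrix.conjTranspose_apply, apply_ite, Finset.sum_ite_eq,
    Finset.sum_ite_eq', eq_comm, Finset.mul_sum]

/-- If `b` is diagonal with its first `r` diagonal entries equal (and the remaining diagonal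
entries distinct from all others), `B` Hermitian, and `b - U*BU` invertible for all unitaries,
then the Haar expectation `E[(b - U*BU)⁻¹]` has its upper-left `r × r` corner equal to a scalar
multiple of the identity; in particular its first `r` diagonal entries are all equal. -/
theorem haar_expectation_resolvent_corner_scalar (N r : ℕ) (hr : r ≤ N)
    (μ : Measure (Matrix.unitaryGroup (Fin N) ℂ)) [IsProbabilityMeasure μ]
    (hinvL : ∀ V : Matrix.unitaryGroup (Fin N) ℂ, MeasurePreserving (fun U => V * U) μ μ)
    (hinvR : ∀ V : Matrix.unitaryGroup (Fin N) ℂ, MeasurePreserving (fun U => U * V) μ μ)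
    (b B : Matrix (Fin N) (Fin N) ℂ) (hB : B.IsHermitian)
    (hdiag : ∀ i j : Fin N, i ≠ j → b i j = 0)
    (heq : ∀ i j : Fin N, (i : ℕ) < r → (j : ℕ) < r → b i i = b j j)
    (hdist : ∀ i j : Fin N, r ≤ (i : ℕ) → i ≠ j → b i i ≠ b j j)
    (hb : ∀ U : Matrix.unitaryGroup (Fin N) ℂ,
      IsUnit (b - star (U : Matrix (Fin N) (Fin N) ℂ) * B * (U : Matrix (Fin N) (Fin N) ℂ))) :
    ∃ c : ℂ, ∀ i j : Fin N, (i : ℕ) < r → (j : ℕ) < r →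
      (∫ U : Matrix.unitaryGroup (Fin N) ℂ,
          ((b - star (U : Matrix (Fin N) (Fin N) ℂ) * B * (U : Matrix (Fin N) (Fin N) ℂ))⁻¹) i j ∂μ)
        = if i = j then c else 0 := by
  classical
  set f : Matrix.unitaryGroup (Fin N) ℂ → Matrix (Fin N) (Fin N) ℂ :=
    fun U => (b - star (U : Matrix (Fin N) (Fin N) ℂ) * B * (U : Matrix (Fin N) (Fin N) ℂ))⁻¹
    with hf
  -- substitution of variables in the integral
  have hsub : ∀ (V : Matrix.unitaryGroup (Fin N) ℂ) (g : Matrix.unitaryGroup (Fin N) ℂ → ℂ),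
      ∫ U, g (U * V) ∂μ = ∫ U, g U ∂μ := by
    intro V g
    let e : Matrix.unitaryGroup (Fin N) ℂ ≃ᵐ Matrix.unitaryGroup (Fin N) ℂ :=
      { toEquiv := Equiv.mulRight V,
        measurable_toFun := (continuous_mul_right V).measurable,
        measurable_invFun := (continuous_mul_right V⁻¹).measurable }
    have h : MeasurableEmbedding (fun U : Matrix.unitaryGroup (Fin N) ℂ => U * V) :=
      e.measurableEmbedding
    exact (hinvR V).integral_comp h g
  -- conjugation identity
  have hconj : ∀ (V : Matrix.unitaryGroup (Fin N) ℂ),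
      ((V : Matrix (Fin N) (Fin N) ℂ) * b = b * (V : Matrix (Fin N) (Fin N) ℂ)) →
      ∀ U, f (U * V)
        = star (V : Matrix (Fin N) (Fin N) ℂ) * f U * (V : Matrix (Fin N) (Fin N) ℂ) := by
    intro V hVb U
    have hVs : star (V : Matrix (Fin N) (Fin N) ℂ) * (V : Matrix (Fin N) (Fin N) ℂ) = 1 := V.2.1
    have hVs' : (V : Matrix (Fin N) (Fin N) ℂ) * star (V : Matrix (Fin N) (Fin N) ℂ) = 1 := V.2.2
    have hVinv : (V : Matrix (Fin N) (Fin N) ℂ)⁻¹ = star (V : Matrix (Fin N) (Fin N) ℂ) :=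
      Matrix.inv_eq_left_inv hVs
    have hVsinv : (star (V : Matrix (Fin N) (Fin N) ℂ))⁻¹ = (V : Matrix (Fin N) (Fin N) ℂ) :=
      Matrix.inv_eq_left_inv hVs'
    have h1 : star (V : Matrix (Fin N) (Fin N) ℂ) * b * (V : Matrix (Fin N) (Fin N) ℂ) = b := by
      rw [Matrix.mul_assoc, ← hVb, ← Matrix.mul_assoc, hVs, Matrix.one_mul]
    have key : b - star ((U * V : Matrix.unitaryGroup (Fin N) ℂ) : Matrix (Fin N) (Fin N) ℂ) * B *
          ((U * V : Matrix.unitaryGroup (Fin N) ℂ) : Matrix (Fin N) (Fin N) ℂ)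
        = star (V : Matrix (Fin N) (Fin N) ℂ) *
            (b - star (U : Matrix (Fin N) (Fin N) ℂ) * B * (U : Matrix (Fin N) (Fin N) ℂ)) *
            (V : Matrix (Fin N) (Fin N) ℂ) := by
      have hc : ((U * V : Matrix.unitaryGroup (Fin N) ℂ) : Matrix (Fin N) (Fin N) ℂ)
          = (U : Matrix (Fin N) (Fin N) ℂ) * (V : Matrix (Fin N) (Fin N) ℂ) := rfl
      rw [hc, StarMul.star_mul, Matrix.mul_sub, Matrix.sub_mul, h1]
      congr 1
      noncomm_ring
    show (b - star ((U * V : Matrix.unitaryGroup (Fin N) ℂ) : Matrix (Fin N) (Fin N) ℂ) * B *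
          ((U * V : Matrix.unitaryGroup (Fin N) ℂ) : Matrix (Fin N) (Fin N) ℂ))⁻¹ = _
    rw [key, Matrix.mul_inv_rev, Matrix.mul_inv_rev, hVinv, hVsinv]
    simp only [hf, Matrix.mul_assoc]
  -- off-diagonal entries vanish
  have hoff : ∀ i j : Fin N, i ≠ j → (∫ U, f U i j ∂μ) = 0 := by
    intro i j hij
    set d : Fin N → ℂ := fun k => if k = i then -1 else 1 with hd
    have hdd : ∀ k, star (d k) * d k = 1 := by
      intro k; simp only [hd]; split_ifs <;> simp
    have hVmem : Matrix.diagonal d ∈ Matrix.unitaryGroup (Fin N) ℂ := by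
      have h1 : star (Matrix.diagonal d) * Matrix.diagonal d = 1 := by
        ext p q
        rw [Matrix.star_eq_conjTranspose, Matrix.diagonal_conjTranspose,
          Matrix.diagonal_mul_diagonal]
        by_cases hpq : p = q
        · subst hpq
          rw [Matrix.diagonal_apply_eq, Matrix.one_apply_eq]
          simpa using hdd p
        · rw [Matrix.diagonal_apply_ne _ hpq, Matrix.one_apply_ne hpq]
      have h2 : Matrix.diagonal d * star (Matrix.diagonal d) = 1 := by
        ext p q
        rw [Matrix.star_eq_conjTranspose, Matrix.diagonal_conjTranspose,
          Matrix.diagonal_mul_diagonal]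
        by_cases hpq : p = q
        · subst hpq
          rw [Matrix.diagonal_apply_eq, Matrix.one_apply_eq]
          simpa [mul_comm] using hdd p
        · rw [Matrix.diagonal_apply_ne _ hpq, Matrix.one_apply_ne hpq]
      exact ⟨h1, h2⟩
    set V : Matrix.unitaryGroup (Fin N) ℂ := ⟨Matrix.diagonal d, hVmem⟩ with hV
    have hcomm : (V : Matrix (Fin N) (Fin N) ℂ) * b = b * (V : Matrix (Fin N) (Fin N) ℂ) := by
      ext p q
      show (Matrix.diagonal d * b) p q = (b * Matrix.diagonal d) p q
      rw [Matrix.diagonal_mul, Matrix.mul_diagonal]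
      by_cases hpq : p = q
      · subst hpq; ring
      · rw [hdiag p q hpq]; ring
    have hpt : ∀ U, f (U * V) i j = -(f U i j) := by
      intro U
      rw [hconj V hcomm U]
      have hVc : (V : Matrix (Fin N) (Fin N) ℂ) = Matrix.diagonal d := rfl
      have hVsc : star (V : Matrix (Fin N) (Fin N) ℂ)
          = Matrix.diagonal (fun k => star (d k)) := by
        rw [hVc, Matrix.star_eq_conjTranspose, Matrix.diagonal_conjTranspose]; rfl
      show (star (V : Matrix (Fin N) (Fin N) ℂ) * f U * (V : Matrix (Fin N) (Fin N) ℂ)) i j = _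
      rw [hVsc, hVc, Matrix.mul_diagonal, Matrix.diagonal_mul]
      simp [hd, Ne.symm hij]
    have h1 : (∫ U, f (U * V) i j ∂μ) = ∫ U, f U i j ∂μ := hsub V (fun U => f U i j)
    have h2 : (∫ U, f (U * V) i j ∂μ) = ∫ U, -(f U i j) ∂μ := by
      congr 1; funext U; exact hpt U
    rw [h2, integral_neg] at h1
    have : (2 : ℂ) * ∫ U, f U i j ∂μ = 0 := by linear_combination -h1
    have h2ne : (2 : ℂ) ≠ 0 := two_ne_zero
    exact (mul_eq_zero.mp this).resolve_left h2ne
  -- diagonal entries in the corner are all equal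
  have hswap : ∀ i j : Fin N, (i : ℕ) < r → (j : ℕ) < r →
      (∫ U, f U i i ∂μ) = ∫ U, f U j j ∂μ := by
    intro i j hi hj
    set σ : Equiv.Perm (Fin N) := Equiv.swap i j with hσ
    have hσinv : ∀ x, σ (σ x) = x := fun x => Equiv.swap_apply_self i j x
    set P : Matrix (Fin N) (Fin N) ℂ :=
      Matrix.of fun p q : Fin N => if σ p = q then (1:ℂ) else 0 with hP
    have hPH : Pᴴ = P := by
      ext p q
      simp only [hP, Matrix.conjTranspose_apply, Matrix.of_apply]
      rw [apply_ite (star : ℂ → ℂ), star_one, star_zero]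
      congr 1
      simp only [eq_iff_iff]
      constructor
      · intro h; rw [← h, hσinv]
      · intro h; rw [← h, hσinv]
    have hPP : P * P = 1 := by
      have := permMat_conj_entry σ (1 : Matrix (Fin N) (Fin N) ℂ)
      ext p q
      have h1 := this p q
      rw [hPH] at h1
      rw [Matrix.mul_one] at h1
      rw [h1]
      simp only [Matrix.one_apply]
      congr 1
      simp only [eq_iff_iff]
      exact ⟨fun h => σ.injective h, fun h => by rw [h]⟩
    have hbσ : ∀ p : Fin N, b (σ p) (σ p) = b p p := by
      intro p
      by_cases hpi : p = i
      · rw [hpi, hσ, Equiv.swap_apply_left]; exact heq j i hj hi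
      · by_cases hpj : p = j
        · rw [hpj, hσ, Equiv.swap_apply_right]; exact heq i j hi hj
        · rw [hσ, Equiv.swap_apply_of_ne_of_ne hpi hpj]
    have hPmem : P ∈ Matrix.unitaryGroup (Fin N) ℂ := by
      constructor
      · rw [Matrix.star_eq_conjTranspose, hPH]; exact hPP
      · rw [Matrix.star_eq_conjTranspose, hPH]; exact hPP
    set V : Matrix.unitaryGroup (Fin N) ℂ := ⟨P, hPmem⟩ with hV
    have hcomm : (V : Matrix (Fin N) (Fin N) ℂ) * b = b * (V : Matrix (Fin N) (Fin N) ℂ) := by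
      ext p q
      show (P * b) p q = (b * P) p q
      simp only [hP, Matrix.mul_apply, Matrix.of_apply, ite_mul, one_mul, zero_mul,
        mul_ite, mul_one, mul_zero]
      rw [Finset.sum_ite_eq (Finset.univ) (σ p) (fun k => b k q)]
      have : ∀ k : Fin N, σ k = q ↔ k = σ q := by
        intro k
        constructor
        · intro h; rw [← h, hσinv]
        · intro h; rw [h, hσinv]
      have hsum2 : (∑ k, if σ k = q then b p k else 0) = ∑ k, if k = σ q then b p k else 0 :=
        Finset.sum_congr rfl (fun k _ => by simp only [this k])
      rw [hsum2, Finset.sum_ite_eq' (Finset.univ) (σ q) (fun k => b p k)]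
      simp only [Finset.mem_univ, if_true]
      by_cases hpq : σ p = q
      · have e2 : σ q = p := by rw [← hpq, hσinv]
        rw [e2, ← hpq, hbσ p]
      · have hqp : p ≠ σ q := fun h => hpq (by rw [h, hσinv])
        rw [hdiag (σ p) q hpq, hdiag p (σ q) hqp]
    have hpt : ∀ U, f (U * V) i i = f U j j := by
      intro U
      rw [hconj V hcomm U]
      have hVc : (V : Matrix (Fin N) (Fin N) ℂ) = P := rfl
      show (star (V : Matrix (Fin N) (Fin N) ℂ) * f U * (V : Matrix (Fin N) (Fin N) ℂ)) i i = _
      rw [hVc, Matrix.star_eq_conjTranspose, hPH]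
      have := permMat_conj_entry σ (f U) i i
      rw [hPH] at this
      calc (P * f U * P) i i = (P * f U * Pᴴ) i i := by rw [hPH]
        _ = f U (σ i) (σ i) := permMat_conj_entry σ (f U) i i
        _ = f U j j := by rw [hσ, Equiv.swap_apply_left]
    have h1 : (∫ U, f (U * V) i i ∂μ) = ∫ U, f U i i ∂μ := hsub V (fun U => f U i i)
    have h2 : (∫ U, f (U * V) i i ∂μ) = ∫ U, f U j j ∂μ := by
      congr 1; funext U; exact hpt U
    rw [h2] at h1
    exact h1.symm
  -- assemble
  by_cases hr0 : r = 0
  · exact ⟨0, fun i j hi _ => absurd hi (by omega)⟩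
  · have h0r : 0 < r := Nat.pos_of_ne_zero hr0
    set i0 : Fin N := ⟨0, lt_of_lt_of_le h0r hr⟩ with hi0
    refine ⟨∫ U, f U i0 i0 ∂μ, fun i j hi hj => ?_⟩
    by_cases hij : i = j
    · subst hij
      rw [if_pos rfl]
      exact hswap i i0 hi (by simpa [hi0] using h0r)
    · rw [if_neg hij]
      exact hoff i j hij
end

section
/- Let (g_n) be a sequence of holomorphic functions on a nonempty open set 𝒜 ⊆ ℂ that is locally uniformly bounded, and let D ⊆ 𝒜 satisfy closure(D) ⊇ 𝒜. If lim_{n→∞} g_n(d) exists for every d ∈ D, then (g_n) converges, uniformly on every compact subset of 𝒜, to a holomorphic function g on 𝒜. -/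
open Filter Topology Metric

/-- Local Lipschitz estimate for a locally uniformly bounded sequence of holomorphic maps,
via the Cauchy estimate for the derivative. -/
lemma vitali_porter_lip (𝒜 : Set ℂ) (h𝒜 : IsOpen 𝒜)
    (g : ℕ → ℂ → ℂ) (hg : ∀ n, DifferentiableOn ℂ (g n) 𝒜)
    (hbd : ∀ z ∈ 𝒜, ∃ U ∈ 𝓝 z, ∃ C : ℝ, ∀ n, ∀ w ∈ U, ‖g n w‖ ≤ C) :
    ∀ z ∈ 𝒜, ∃ r > 0, ∃ L : ℝ, 0 ≤ L ∧ Metric.closedBall z r ⊆ 𝒜 ∧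
      ∀ n, ∀ x ∈ Metric.closedBall z r, ∀ y ∈ Metric.closedBall z r,
        ‖g n x - g n y‖ ≤ L * ‖x - y‖ := by
  intro z hz
  obtain ⟨U, hU, C, hC⟩ := hbd z hz
  obtain ⟨r', hr', hsub⟩ := Metric.nhds_basis_closedBall.mem_iff.mp
    (Filter.inter_mem hU (h𝒜.mem_nhds hz))
  have hC0 : 0 ≤ C := le_trans (norm_nonneg _) (hC 0 z (hsub (Metric.mem_closedBall_self hr'.le)).1)
  set r := r' / 2 with hrdef
  have hr : 0 < r := by positivity
  have hball : ∀ w ∈ Metric.closedBall z r, Metric.closedBall w r ⊆ Metric.closedBall z r' := by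
    intro w hw
    refine Metric.closedBall_subset_closedBall' ?_
    simp only [Metric.mem_closedBall] at hw
    linarith
  have hsubA : Metric.closedBall z r ⊆ 𝒜 := fun x hx =>
    (hsub (Metric.closedBall_subset_closedBall (by linarith) hx)).2
  refine ⟨r, hr, C / r, by positivity, hsubA, ?_⟩
  intro n x hx y hy
  have hderiv : ∀ w ∈ Metric.closedBall z r, ‖deriv (g n) w‖ ≤ C / r := by
    intro w hw
    have hsub2 : Metric.closedBall w r ⊆ 𝒜 := fun u hu => (hsub (hball w hw hu)).2
    have hd : DiffContOnCl ℂ (g n) (Metric.ball w r) := by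
      refine DifferentiableOn.diffContOnCl ?_
      rw [closure_ball w hr.ne']
      exact (hg n).mono hsub2
    refine Complex.norm_deriv_le_of_forall_mem_sphere_norm_le hr hd ?_
    intro u hu
    exact hC n u (hsub (hball w hw (Metric.sphere_subset_closedBall hu))).1
  have hdiffAt : ∀ w ∈ Metric.closedBall z r, DifferentiableAt ℂ (g n) w := fun w hw =>
    (hg n).differentiableAt (h𝒜.mem_nhds (hsubA hw))
  have hfderiv : ∀ w ∈ Metric.closedBall z r, ‖fderiv ℂ (g n) w‖ ≤ C / r := by
    intro w hw
    have h1 : fderiv ℂ (g n) w =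
        ContinuousLinearMap.smulRight (1 : ℂ →L[ℂ] ℂ) (deriv (g n) w) :=
      ((hdiffAt w hw).hasDerivAt.hasFDerivAt).fderiv
    rw [h1, ContinuousLinearMap.norm_smulRight_apply, norm_one, one_mul]
    exact hderiv w hw
  simpa using (convex_closedBall z r).norm_image_sub_le_of_norm_fderiv_le
    hdiffAt hfderiv hy hx

/-- Vitali–Porter theorem: a locally uniformly bounded sequence of holomorphic functions on a
nonempty open set `𝒜 ⊆ ℂ` which converges pointwise on a dense subset `D` of `𝒜` converges,
uniformly on every compact subset of `𝒜`, to a holomorphic function. -/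
theorem vitali_porter (𝒜 : Set ℂ) (h𝒜 : IsOpen 𝒜) (hne : 𝒜.Nonempty)
    (D : Set ℂ) (hD : D ⊆ 𝒜) (hdense : 𝒜 ⊆ closure D)
    (g : ℕ → ℂ → ℂ) (hg : ∀ n, DifferentiableOn ℂ (g n) 𝒜)
    (hbd : ∀ z ∈ 𝒜, ∃ U ∈ 𝓝 z, ∃ C : ℝ, ∀ n, ∀ w ∈ U, ‖g n w‖ ≤ C)
    (hconv : ∀ d ∈ D, ∃ l : ℂ, Tendsto (fun n => g n d) atTop (𝓝 l)) :
    ∃ G : ℂ → ℂ, DifferentiableOn ℂ G 𝒜 ∧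
      ∀ K : Set ℂ, K ⊆ 𝒜 → IsCompact K → TendstoUniformlyOn g G atTop K := by
  have lip := vitali_porter_lip 𝒜 h𝒜 g hg hbd
  -- uniform Cauchy on every compact subset
  have key : ∀ K : Set ℂ, K ⊆ 𝒜 → IsCompact K → UniformCauchySeqOn g atTop K := by
    intro K hKA hK
    rw [Metric.uniformCauchySeqOn_iff]
    intro ε hε
    -- for each point of K, a small ball on which all g n are within ε/3 of their value at a
    -- nearby point of D
    have h2 : ∀ z ∈ K, ∃ δ > 0, ∃ d, d ∈ D ∧
        ∀ n, ∀ x ∈ Metric.ball z δ, dist (g n x) (g n d) ≤ ε / 3 := by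
      intro z hz
      obtain ⟨r, hr, L, hL0, hsubA, hLip⟩ := lip z (hKA hz)
      set δ := min r (ε / (6 * (L + 1))) with hδdef
      have hδ : 0 < δ := lt_min hr (by positivity)
      obtain ⟨d, hdD, hdz⟩ := Metric.mem_closure_iff.mp (hdense (hKA hz)) δ hδ
      refine ⟨δ, hδ, d, hdD, ?_⟩
      intro n x hx
      have hδr : δ ≤ r := min_le_left _ _
      have hδε : δ ≤ ε / (6 * (L + 1)) := min_le_right _ _
      have hxB : x ∈ Metric.closedBall z r :=
        Metric.mem_closedBall.mpr (le_trans (Metric.mem_ball.mp hx).le hδr)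
      have hdB : d ∈ Metric.closedBall z r := by
        rw [Metric.mem_closedBall, dist_comm]
        exact le_trans hdz.le hδr
      have h3 : ‖g n x - g n d‖ ≤ L * ‖x - d‖ := hLip n x hxB d hdB
      have h4 : ‖x - d‖ ≤ 2 * δ := by
        calc ‖x - d‖ ≤ ‖x - z‖ + ‖z - d‖ := norm_sub_le_norm_sub_add_norm_sub x z d
          _ ≤ 2 * δ := by
            have h5 : dist x z < δ := Metric.mem_ball.mp hx
            have h6 : dist z d < δ := hdz
            rw [← dist_eq_norm, ← dist_eq_norm]
            linarith
      rw [dist_eq_norm]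
      calc ‖g n x - g n d‖ ≤ L * (2 * δ) := h3.trans (by nlinarith)
        _ ≤ L * (2 * (ε / (6 * (L + 1)))) := by nlinarith
        _ = L * ε / (3 * (L + 1)) := by
          have hL1 : L + 1 ≠ 0 := by positivity
          field_simp
          ring
        _ ≤ ε / 3 := by
          rw [div_le_div_iff₀ (by positivity) (by norm_num)]
          nlinarith
    choose! δ hδ d hdD hd using h2
    obtain ⟨t, htK, hcov⟩ := hK.elim_nhds_subcover (fun z => Metric.ball z (δ z))
      (fun z hz => Metric.ball_mem_nhds z (hδ z hz))
    have h3 : ∀ z ∈ t, ∃ N : ℕ, ∀ m ≥ N, ∀ n ≥ N,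
        dist (g m (d z)) (g n (d z)) < ε / 3 := by
      intro z hz
      obtain ⟨l, hl⟩ := hconv (d z) (hdD z (htK z hz))
      exact Metric.cauchySeq_iff.mp hl.cauchySeq (ε / 3) (by positivity)
    choose! N hN using h3
    refine ⟨t.sup N, fun m hm n hn x hx => ?_⟩
    obtain ⟨z, hzt, hxz⟩ := Set.mem_iUnion₂.mp (hcov hx)
    have hzK := htK z hzt
    have hNz : N z ≤ t.sup N := Finset.le_sup hzt
    calc dist (g m x) (g n x)
        ≤ dist (g m x) (g m (d z)) + dist (g m (d z)) (g n (d z)) + dist (g n (d z)) (g n x) :=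
          dist_triangle4 _ _ _ _
      _ < ε / 3 + ε / 3 + ε / 3 := by
          have ha := hd z hzK m x hxz
          have hb := hN z hzt m (le_trans hNz hm) n (le_trans hNz hn)
          have hc := hd z hzK n x hxz
          rw [dist_comm (g n (d z))]
          linarith
      _ = ε := by ring
  -- pointwise limit
  have hptwise : ∀ z, ∃ l : ℂ, z ∈ 𝒜 → Tendsto (fun n => g n z) atTop (𝓝 l) := by
    intro z
    by_cases hz : z ∈ 𝒜
    · have hc : CauchySeq fun n => g n z := by
        have := key {z} (Set.singleton_subset_iff.mpr hz) isCompact_singleton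
        rw [Metric.uniformCauchySeqOn_iff] at this
        rw [Metric.cauchySeq_iff]
        intro ε hε
        obtain ⟨M, hM⟩ := this ε hε
        exact ⟨M, fun m hm n hn => hM m hm n hn z rfl⟩
      obtain ⟨l, hl⟩ := cauchySeq_tendsto_of_complete hc
      exact ⟨l, fun _ => hl⟩
    · exact ⟨0, fun h => absurd h hz⟩
  choose G hG using hptwise
  have hUnif : ∀ K : Set ℂ, K ⊆ 𝒜 → IsCompact K → TendstoUniformlyOn g G atTop K := by
    intro K hKA hK
    exact (key K hKA hK).tendstoUniformlyOn_of_tendsto fun x hx => hG x (hKA hx)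
  refine ⟨G, ?_, hUnif⟩
  have hloc : TendstoLocallyUniformlyOn g G atTop 𝒜 :=
    (tendstoLocallyUniformlyOn_iff_forall_isCompact h𝒜).mpr fun K hKA hK => hUnif K hKA hK
  exact hloc.differentiableOn (Eventually.of_forall hg) h𝒜
end

section
/- Let h : ℂ⁺ → ℂ⁺ be analytic and suppose h extends analytically to a real neighborhood of x ∈ ℝ with h real-valued there. Then h'(x) > 0 unless h is constant. -/
/-!
Near `x`, `h z - h x = (z - x) ^ n * g z` with `g x ≠ 0` and `n ≥ 1`: by the identity theorem on
the connected domain `h` is not locally constant. Since `h` is real on the real axis, `a := g x` is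
real, and letting `z = x + t w` tend to `x` along a ray into the upper half-plane gives
`Im (w ^ n * a) ≥ 0` whenever `Im w > 0`. For `w = exp (iθ)` this says `a sin (nθ) ≥ 0` on `(0, π)`;
`θ = π / 2n` forces `a > 0`, and then `θ = 3π / 2n` forces `n = 1`, so `h' x = g x = a`.
-/

open Complex Metric Filter Topology Set
open scoped Real

theorem isPreconnected_setOf_im_pos_union_ball (x : ℝ) {ε : ℝ} (hε : 0 < ε) :
    IsPreconnected ({z : ℂ | 0 < z.im} ∪ ball (x : ℂ) ε) := by
  refine (convex_halfSpace_im_gt 0).isPreconnected.union' ⟨x + ε / 2 * I, ?_, ?_⟩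
    (convex_ball _ _).isPreconnected
  · simpa using half_pos hε
  · simp [abs_of_pos hε, hε]

theorem hasDerivAt_of_eventuallyEq_sub_smul {𝕜 F : Type*} [NontriviallyNormedField 𝕜]
    [NormedAddCommGroup F] [NormedSpace 𝕜 F] {f g : 𝕜 → F} {x : 𝕜} (hg : ContinuousAt g x)
    (hfg : ∀ᶠ z in 𝓝 x, f z - f x = (z - x) • g z) : HasDerivAt f (g x) x := by
  refine hasDerivAt_iff_tendsto_slope.2 (hg.tendsto.mono_left nhdsWithin_le_nhds |>.congr' ?_)
  filter_upwards [nhdsWithin_le_nhds hfg, self_mem_nhdsWithin] with z hz hzx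
  rw [slope_def_module, hz, smul_smul, inv_mul_cancel₀ (sub_ne_zero.2 hzx), one_smul]

section

variable {f g : ℂ → ℂ} {x : ℝ} {n : ℕ}

theorem im_eq_zero_of_eventuallyEq_pow_mul (hg : ContinuousAt g x)
    (hf : ∀ᶠ y : ℝ in 𝓝 x, (f y).im = 0)
    (hfg : ∀ᶠ z in 𝓝 (x : ℂ), f z = (z - x) ^ n * g z) : (g x).im = 0 := by
  have hlim : Tendsto (fun y : ℝ => g y) (𝓝[≠] x) (𝓝 (g x)) :=
    (hg.comp continuous_ofReal.continuousAt).tendsto.mono_left nhdsWithin_le_nhds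
  refine (isClosed_eq continuous_im continuous_const).mem_of_tendsto hlim ?_
  have hfg_real := continuous_ofReal.continuousAt.tendsto.eventually hfg
  filter_upwards [nhdsWithin_le_nhds hf, nhdsWithin_le_nhds hfg_real, self_mem_nhdsWithin]
    with y hfy hfgy hyx
  rw [hfgy, ← ofReal_sub, ← ofReal_pow, im_ofReal_mul] at hfy
  exact (mul_eq_zero.1 hfy).resolve_left (pow_ne_zero _ (sub_ne_zero.2 hyx))

theorem im_pow_mul_nonneg_of_eventuallyEq_pow_mul (hg : ContinuousAt g x)
    (hf : ∀ᶠ z in 𝓝 (x : ℂ), 0 < z.im → 0 < (f z).im)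
    (hfg : ∀ᶠ z in 𝓝 (x : ℂ), f z = (z - x) ^ n * g z) {w : ℂ} (hw : 0 < w.im) :
    0 ≤ (w ^ n * g x).im := by
  have hline : Tendsto (fun t : ℝ => (x : ℂ) + t * w) (𝓝[>] 0) (𝓝 x) := by
    have : Continuous (fun t : ℝ => (x : ℂ) + t * w) := by fun_prop
    simpa using (this.tendsto 0).mono_left nhdsWithin_le_nhds
  refine ge_of_tendsto ((continuous_im.tendsto _).comp
    (tendsto_const_nhds.mul (hg.tendsto.comp hline))) ?_
  filter_upwards [hline.eventually hf, hline.eventually hfg, self_mem_nhdsWithin]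
    with t hft hfgt (ht : 0 < t)
  have him := hft (by simpa using mul_pos ht hw)
  rw [hfgt, add_sub_cancel_left, mul_pow, ← ofReal_pow, mul_assoc, im_ofReal_mul] at him
  exact (pos_of_mul_pos_right him (by positivity)).le

end

theorem pos_and_eq_one_of_forall_im_pow_mul_nonneg {a : ℝ} {n : ℕ} (ha : a ≠ 0) (hn : n ≠ 0)
    (h : ∀ w : ℂ, 0 < w.im → 0 ≤ (w ^ n * a).im) : 0 < a ∧ n = 1 := by
  have hsin : ∀ θ ∈ Ioo 0 π, 0 ≤ a * Real.sin (n * θ) := fun θ hθ => by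
    have := h (exp (θ * I)) (by
      rw [exp_ofReal_mul_I_im]; exact Real.sin_pos_of_pos_of_lt_pi hθ.1 hθ.2)
    rwa [← exp_nat_mul, ← mul_assoc, ← ofReal_natCast, ← ofReal_mul, mul_comm,
      im_ofReal_mul, exp_ofReal_mul_I_im] at this
  have hnR : (1 : ℝ) ≤ n := by exact_mod_cast Nat.one_le_iff_ne_zero.2 hn
  have hcancel (c : ℝ) : n * (c / (2 * n)) = c / 2 := by field_simp
  have ha_pos : 0 < a := by
    have := hsin (π / (2 * n)) ⟨by positivity, by
      rw [div_lt_iff₀ (by positivity)]; nlinarith [Real.pi_pos]⟩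
    rw [hcancel, Real.sin_pi_div_two, mul_one] at this
    exact this.lt_of_ne' ha
  refine ⟨ha_pos, ?_⟩
  by_contra hn1
  have hn2 : (2 : ℝ) ≤ n := by exact_mod_cast (show 2 ≤ n by omega)
  have := hsin (3 * π / (2 * n)) ⟨by positivity, by
    rw [div_lt_iff₀ (by positivity)]; nlinarith [Real.pi_pos]⟩
  rw [hcancel] at this
  have h3 : Real.sin (3 * π / 2) = -1 := by
    rw [show 3 * π / 2 = π / 2 + π by ring, Real.sin_add_pi, Real.sin_pi_div_two]
  rw [h3] at this
  linarith

theorem AnalyticAt.deriv_pos_of_im_pos_of_real {f : ℂ → ℂ} {x : ℝ} (hf : AnalyticAt ℂ f x)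
    (hnc : ¬ ∀ᶠ z in 𝓝 (x : ℂ), f z = f x) (hreal : ∀ᶠ y : ℝ in 𝓝 x, (f y).im = 0)
    (hpos : ∀ᶠ z in 𝓝 (x : ℂ), 0 < z.im → 0 < (f z).im) :
    0 < (deriv f x).re ∧ (deriv f x).im = 0 := by
  have hfx : (f x).im = 0 := hreal.self_of_nhds
  have hf' : AnalyticAt ℂ (fun z => f z - f x) x := hf.sub analyticAt_const
  obtain ⟨n, g, hg, hgx, hfg⟩ := hf'.exists_eventuallyEq_pow_smul_nonzero_iff.2
    (by simpa only [sub_eq_zero] using hnc)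
  simp only [smul_eq_mul] at hfg
  have hn : n ≠ 0 := by
    rintro rfl
    simpa [eq_comm, hgx] using hfg.self_of_nhds
  have hgx_im : (g x).im = 0 := im_eq_zero_of_eventuallyEq_pow_mul hg.continuousAt
    (hreal.mono fun y hy => by simp [hy, hfx]) hfg
  have hgx_real : g x = (g x).re := ext rfl (by simpa using hgx_im)
  have hg_ray (w : ℂ) (hw : 0 < w.im) : 0 ≤ (w ^ n * (g x).re).im := hgx_real ▸
    im_pow_mul_nonneg_of_eventuallyEq_pow_mul hg.continuousAt
      (hpos.mono fun z hz hz' => by simpa [hfx] using hz hz') hfg hw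
  obtain ⟨ha, rfl⟩ := pos_and_eq_one_of_forall_im_pow_mul_nonneg
    (fun h0 => hgx (by rw [hgx_real, h0, ofReal_zero])) hn hg_ray
  rw [(hasDerivAt_of_eventuallyEq_sub_smul hg.continuousAt (by simpa using hfg)).deriv]
  exact ⟨ha, hgx_im⟩

/-- If `h : ℂ⁺ → ℂ⁺` is analytic, extends analytically to a real neighborhood of `x ∈ ℝ` where
it is real-valued, and is nonconstant, then `h'(x) > 0` (in particular `h'(x)` is real). -/
theorem nonconstant_pick_function_deriv_pos (x ε : ℝ) (hε : 0 < ε) (h : ℂ → ℂ)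
    (hdiff : DifferentiableOn ℂ h ({z : ℂ | 0 < z.im} ∪ Metric.ball (x : ℂ) ε))
    (hmap : ∀ z : ℂ, 0 < z.im → 0 < (h z).im)
    (hreal : ∀ y : ℝ, (y : ℂ) ∈ Metric.ball (x : ℂ) ε → (h (y : ℂ)).im = 0)
    (hnc : ¬ ∀ z ∈ ({z : ℂ | 0 < z.im} ∪ Metric.ball (x : ℂ) ε), h z = h (x : ℂ)) :
    0 < (deriv h (x : ℂ)).re ∧ (deriv h (x : ℂ)).im = 0 := by
  have hU : IsOpen ({z : ℂ | 0 < z.im} ∪ ball (x : ℂ) ε) :=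
    (isOpen_lt continuous_const continuous_im).union isOpen_ball
  have hxU : (x : ℂ) ∈ {z : ℂ | 0 < z.im} ∪ ball (x : ℂ) ε := Or.inr (mem_ball_self hε)
  have han := hdiff.analyticOnNhd hU
  refine (han x hxU).deriv_pos_of_im_pos_of_real (fun hev => hnc ?_) ?_
    (Eventually.of_forall hmap)
  · exact han.eqOn_of_preconnected_of_eventuallyEq analyticOnNhd_const
      (isPreconnected_setOf_im_pos_union_ball x hε) hxU hev
  · filter_upwards [continuous_ofReal.continuousAt.preimage_mem_nhds (ball_mem_nhds _ hε)]
      using hreal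
end
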